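/- arXiv:2308.14573 — 3 statements merged into one kernel-verified Lean document; each statement's English description precedes it below -/
import Mathlib

section
/- The Langevin function L(x) = coth(x) - 1/x (with L(0) = 0) is strictly monotone increasing on ℝ, hence injective. -/
noncomputable def langevin (x : ℝ) : ℝ :=
  if x = 0 then 0 else Real.cosh x / Real.sinh x - 1 / x

/-!
`langevin` is odd, so it suffices to show that it is strictly increasing on `[0, ∞)`. On `(0, ∞)`
its derivative is `1 / x ^ 2 - 1 / sinh x ^ 2`, positive because `x < sinh x`; and it is positive
there because `x cosh x - sinh x`, whose derivative is `x sinh x`, vanishes at `0` and increases.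
-/

open Real Set

lemma Real.sinh_lt_mul_cosh {x : ℝ} (hx : 0 < x) : sinh x < x * cosh x := by
  have hderiv (y : ℝ) : HasDerivAt (fun y ↦ y * cosh y - sinh y) (y * sinh y) y := by
    simpa using ((hasDerivAt_id' y).fun_mul (hasDerivAt_cosh y)).fun_sub (hasDerivAt_sinh y)
  have hmono : StrictMonoOn (fun y ↦ y * cosh y - sinh y) (Ici 0) := by
    refine strictMonoOn_of_deriv_pos (convex_Ici 0)
      (fun y _ ↦ (hderiv y).continuousAt.continuousWithinAt) fun y hy ↦ ?_
    rw [interior_Ici, mem_Ioi] at hy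
    rw [(hderiv y).deriv]
    exact mul_pos hy (sinh_pos_iff.2 hy)
  simpa using hmono self_mem_Ici hx.le hx

lemma langevin_of_ne_zero {x : ℝ} (hx : x ≠ 0) : langevin x = cosh x / sinh x - 1 / x :=
  if_neg hx

lemma langevin_zero : langevin 0 = 0 :=
  if_pos rfl

lemma langevin_neg (x : ℝ) : langevin (-x) = -langevin x := by
  rcases eq_or_ne x 0 with rfl | hx
  · simp [langevin_zero]
  · rw [langevin_of_ne_zero hx, langevin_of_ne_zero (neg_ne_zero.2 hx), cosh_neg, sinh_neg]
    ring

lemma langevin_pos {x : ℝ} (hx : 0 < x) : 0 < langevin x := by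
  rw [langevin_of_ne_zero hx.ne', sub_pos, div_lt_div_iff₀ hx (sinh_pos_iff.2 hx), one_mul,
    mul_comm]
  exact sinh_lt_mul_cosh hx

lemma hasDerivAt_langevin {x : ℝ} (hx : x ≠ 0) :
    HasDerivAt langevin (1 / x ^ 2 - 1 / sinh x ^ 2) x := by
  have hcoth := (hasDerivAt_cosh x).div (hasDerivAt_sinh x) (sinh_ne_zero.2 hx)
  have hinv : HasDerivAt (fun y : ℝ ↦ 1 / y) (-(1 / x ^ 2)) x := by
    simpa [one_div] using hasDerivAt_inv hx
  have hderiv : (sinh x * sinh x - cosh x * cosh x) / sinh x ^ 2 - -(1 / x ^ 2)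
      = 1 / x ^ 2 - 1 / sinh x ^ 2 := by
    -- every `1` becomes `cosh x ^ 2 - sinh x ^ 2`, after which the identity is a ring identity
    rw [← sq, ← sq, ← cosh_sq_sub_sinh_sq x]
    ring
  refine (hderiv ▸ hcoth.sub hinv).congr_of_eventuallyEq ?_
  filter_upwards [isOpen_ne.mem_nhds hx] with y hy
  exact langevin_of_ne_zero hy

lemma langevin_strictMonoOn_Ioi : StrictMonoOn langevin (Ioi 0) := by
  refine strictMonoOn_of_deriv_pos (convex_Ioi 0)
    (fun y hy ↦ (hasDerivAt_langevin (ne_of_gt hy)).continuousAt.continuousWithinAt)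
    fun y hy ↦ ?_
  rw [interior_Ioi, mem_Ioi] at hy
  rw [(hasDerivAt_langevin hy.ne').deriv, sub_pos]
  exact one_div_lt_one_div_of_lt (by positivity)
    (pow_lt_pow_left₀ (self_lt_sinh_iff.2 hy) hy.le two_ne_zero)

lemma langevin_strictMonoOn_Ici : StrictMonoOn langevin (Ici 0) := by
  intro a ha b _ hab
  rcases (mem_Ici.1 ha).eq_or_lt with rfl | ha
  · rw [langevin_zero]
    exact langevin_pos hab
  · exact langevin_strictMonoOn_Ioi ha (ha.trans hab) hab

theorem langevin_strictMono : StrictMono langevin ∧ Function.Injective langevin := by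
  have hmono : StrictMono langevin :=
    strictMono_of_odd_strictMonoOn_nonneg langevin_neg langevin_strictMonoOn_Ici
  exact ⟨hmono, hmono.injective⟩
end

section
/- Let Ms > 0, a_J > 0, α ≥ 0 with α·Ms/(3·a_J) < 1. Then for every H > 0 there exists M with 0 ≤ M ≤ Ms satisfying the implicit anhysteretic equation M = Ms·(coth((H + αM)/a_J) - a_J/(H + αM)). -/
open Real

lemma sinh_nn (y : ℝ) (hy : 0 ≤ y) : 0 ≤ Real.sinh y := by
  simpa using Real.sinh_le_sinh.mpr hy

lemma sinh_le_cosh' (y : ℝ) : Real.sinh y ≤ Real.cosh y := by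
  have := Real.exp_pos (-y)
  rw [Real.cosh_eq, Real.sinh_eq]; linarith

lemma aux1 : ∀ x : ℝ, 0 ≤ x → Real.sinh x ≤ x * Real.cosh x := by
  intro x hx
  have h : MonotoneOn (fun x : ℝ => x * Real.cosh x - Real.sinh x) (Set.Ici 0) := by
    apply monotoneOn_of_deriv_nonneg (convex_Ici 0)
    · fun_prop
    · fun_prop
    · intro y hy
      have hd : deriv (fun x : ℝ => x * Real.cosh x - Real.sinh x) y = y * Real.sinh y := by
        simp
      rw [hd]
      have hy0 : 0 ≤ y := le_of_lt (by simpa using hy)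
      exact mul_nonneg hy0 (sinh_nn y hy0)
  have := h (Set.self_mem_Ici) (Set.mem_Ici.mpr hx) hx
  simpa using this

lemma aux2 : ∀ x : ℝ, 0 ≤ x → x * Real.cosh x ≤ (x + 1) * Real.sinh x := by
  intro x hx
  have h : MonotoneOn (fun x : ℝ => (x + 1) * Real.sinh x - x * Real.cosh x) (Set.Ici 0) := by
    apply monotoneOn_of_deriv_nonneg (convex_Ici 0)
    · fun_prop
    · fun_prop
    · intro y hy
      have hd : deriv (fun x : ℝ => (x + 1) * Real.sinh x - x * Real.cosh x) y
          = Real.sinh y + (y + 1) * Real.cosh y - (Real.cosh y + y * Real.sinh y) := by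
        simp
      rw [hd]
      have hy0 : 0 ≤ y := le_of_lt (by simpa using hy)
      have h1 := sinh_le_cosh' y
      have h2 := sinh_nn y hy0
      nlinarith
  have := h (Set.self_mem_Ici) (Set.mem_Ici.mpr hx) hx
  simp at this
  linarith

lemma lang_lb (x : ℝ) (hx : 0 < x) : 1/x ≤ Real.cosh x / Real.sinh x := by
  have hs : 0 < Real.sinh x := by rwa [Real.sinh_pos_iff]
  rw [div_le_div_iff₀ hx hs]
  have := aux1 x hx.le
  linarith

lemma lang_ub (x : ℝ) (hx : 0 < x) : Real.cosh x / Real.sinh x ≤ 1 + 1/x := by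
  have hs : 0 < Real.sinh x := by rwa [Real.sinh_pos_iff]
  rw [div_le_iff₀ hs]
  have := aux2 x hx.le
  have hx' : x ≠ 0 := hx.ne'
  have hc : x * (1 / x) = 1 := mul_one_div_cancel hx.ne'
  nlinarith [hs, hx, this, hc]

theorem anhysteretic_implicit_solution
    (Ms aJ α : ℝ) (hMs : 0 < Ms) (haJ : 0 < aJ) (hα : 0 ≤ α)
    (hαs : α * Ms / (3 * aJ) < 1) :
    ∀ H : ℝ, 0 < H → ∃ M : ℝ, 0 ≤ M ∧ M ≤ Ms ∧
      M = Ms * (Real.cosh ((H + α * M) / aJ) / Real.sinh ((H + α * M) / aJ)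
        - aJ / (H + α * M)) := by
  intro H hH
  set f : ℝ → ℝ := fun M => Ms * (Real.cosh ((H + α * M) / aJ) / Real.sinh ((H + α * M) / aJ)
      - aJ / (H + α * M)) - M with hfdef
  have hpos : ∀ M ∈ Set.Icc (0:ℝ) Ms, 0 < H + α * M := by
    intro M hM
    have := mul_nonneg hα hM.1
    linarith
  have hcont : ContinuousOn f (Set.Icc 0 Ms) := by
    apply ContinuousOn.sub _ (continuousOn_id)
    apply ContinuousOn.mul continuousOn_const
    apply ContinuousOn.sub
    · apply ContinuousOn.div (by fun_prop) (by fun_prop)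
      intro M hM
      have : 0 < Real.sinh ((H + α * M) / aJ) := by
        rw [Real.sinh_pos_iff]; exact div_pos (hpos M hM) haJ
      exact this.ne'
    · exact ContinuousOn.div continuousOn_const (by fun_prop)
        (fun M hM => (hpos M hM).ne')
  have key : ∀ M ∈ Set.Icc (0:ℝ) Ms,
      aJ / (H + α * M) ≤ Real.cosh ((H + α * M) / aJ) / Real.sinh ((H + α * M) / aJ) ∧
      Real.cosh ((H + α * M) / aJ) / Real.sinh ((H + α * M) / aJ) ≤ 1 + aJ / (H + α * M) := by
    intro M hM
    have hp := hpos M hM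
    have hx : 0 < (H + α * M) / aJ := div_pos hp haJ
    have h1 := lang_lb _ hx
    have h2 := lang_ub _ hx
    rw [one_div_div] at h1 h2
    exact ⟨h1, h2⟩
  have hf0 : 0 ≤ f 0 := by
    have := (key 0 ⟨le_refl 0, hMs.le⟩).1
    have : 0 ≤ Real.cosh ((H + α * 0) / aJ) / Real.sinh ((H + α * 0) / aJ)
        - aJ / (H + α * 0) := by linarith
    simp only [hfdef]
    have := mul_nonneg hMs.le this
    linarith
  have hfMs : f Ms ≤ 0 := by
    have h2 := (key Ms ⟨hMs.le, le_refl Ms⟩).2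
    have hle : Real.cosh ((H + α * Ms) / aJ) / Real.sinh ((H + α * Ms) / aJ)
        - aJ / (H + α * Ms) ≤ 1 := by linarith
    simp only [hfdef]
    nlinarith
  have hmem : (0:ℝ) ∈ Set.Icc (f Ms) (f 0) := ⟨hfMs, hf0⟩
  obtain ⟨M, hM, hFM⟩ := intermediate_value_Icc' hMs.le hcont hmem
  refine ⟨M, hM.1, hM.2, ?_⟩
  simp only [hfdef] at hFM
  linarith
end

section
/- The derivative of the Langevin function, L'(x) = 1/x² - 1/sinh(x)², satisfies 0 < L'(x) ≤ 1/3 for all x (with L'(0) = 1/3 by continuous extension). -/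
open Nat

noncomputable def langevinDeriv (x : ℝ) : ℝ :=
  if x = 0 then 1 / 3 else 1 / x ^ 2 - 1 / (Real.sinh x) ^ 2

lemma pow12_le : ∀ n : ℕ, 12 ^ (n + 1) ≤ 6 * (2 * (n + 1))! := by
  intro n
  induction n with
  | zero => norm_num
  | succ k ih =>
    have h : (2 * (k + 2))! = (2 * (k + 1) + 2) * ((2 * (k + 1) + 1) * (2 * (k + 1))!) := by
      have : 2 * (k + 2) = (2 * (k + 1) + 1) + 1 := by ring
      rw [this, Nat.factorial_succ, Nat.factorial_succ]
    calc 12 ^ (k + 2) = 12 * 12 ^ (k + 1) := by ring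
      _ ≤ 12 * (6 * (2 * (k + 1))!) := by
          exact Nat.mul_le_mul_left 12 ih
      _ ≤ 6 * (2 * (k + 2))! := by
          rw [h]
          have h1 : (12 : ℕ) ≤ (2 * (k + 1) + 2) * (2 * (k + 1) + 1) := by nlinarith
          calc 12 * (6 * (2 * (k + 1))!) = 6 * (12 * (2 * (k + 1))!) := by ring
            _ ≤ 6 * (((2 * (k + 1) + 2) * (2 * (k + 1) + 1)) * (2 * (k + 1))!) := by
                exact Nat.mul_le_mul_left 6 (Nat.mul_le_mul_right _ h1)
            _ = 6 * ((2 * (k + 1) + 2) * ((2 * (k + 1) + 1) * (2 * (k + 1))!)) := by ring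

lemma cosh_key (y : ℝ) (h : y ^ 2 < 12) :
    (Real.cosh y - 1) * (12 - y ^ 2) ≤ 6 * y ^ 2 := by
  have hr0 : 0 ≤ y ^ 2 / 12 := by positivity
  have hr1 : y ^ 2 / 12 < 1 := by linarith
  -- shifted cosh series
  have hc : HasSum (fun n : ℕ ↦ y ^ (2 * (n + 1)) / ((2 * (n + 1))! : ℝ)) (Real.cosh y - 1) := by
    have := (hasSum_nat_add_iff' (f := fun n : ℕ ↦ y ^ (2 * n) / ((2 * n)! : ℝ)) 1).mpr
      y.hasSum_cosh
    simpa using this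
  -- geometric series
  have hg : HasSum (fun n : ℕ ↦ 6 * (y ^ 2 / 12) * (y ^ 2 / 12) ^ n)
      (6 * (y ^ 2 / 12) * (1 - y ^ 2 / 12)⁻¹) :=
    (hasSum_geometric_of_lt_one hr0 hr1).mul_left _
  have hle : Real.cosh y - 1 ≤ 6 * (y ^ 2 / 12) * (1 - y ^ 2 / 12)⁻¹ := by
    refine hasSum_le (fun n ↦ ?_) hc hg
    have e1 : y ^ (2 * (n + 1)) = (y ^ 2) ^ (n + 1) := by rw [← pow_mul]
    have e2 : 6 * (y ^ 2 / 12) * (y ^ 2 / 12) ^ n = 6 * (y ^ 2) ^ (n + 1) / 12 ^ (n + 1) := by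
      rw [div_pow]; ring
    rw [e1, e2, div_le_div_iff₀ (by positivity) (by positivity)]
    have hfac : (12 : ℝ) ^ (n + 1) ≤ 6 * ((2 * (n + 1))! : ℝ) := by
      have := pow12_le n
      calc (12 : ℝ) ^ (n + 1) = ((12 ^ (n + 1) : ℕ) : ℝ) := by push_cast; ring
        _ ≤ ((6 * (2 * (n + 1))! : ℕ) : ℝ) := by exact_mod_cast this
        _ = 6 * ((2 * (n + 1))! : ℝ) := by push_cast; ring
    have hy : 0 ≤ (y ^ 2) ^ (n + 1) := by positivity
    calc (y ^ 2) ^ (n + 1) * 12 ^ (n + 1) ≤ (y ^ 2) ^ (n + 1) * (6 * ((2 * (n + 1))! : ℝ)) :=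
          mul_le_mul_of_nonneg_left hfac hy
      _ = 6 * (y ^ 2) ^ (n + 1) * ((2 * (n + 1))! : ℝ) := by ring
  have h12 : (0 : ℝ) < 12 - y ^ 2 := by linarith
  have e3 : 6 * (y ^ 2 / 12) * (1 - y ^ 2 / 12)⁻¹ = 6 * y ^ 2 / (12 - y ^ 2) := by
    rw [eq_div_iff (ne_of_gt h12)]
    field_simp
  rw [e3] at hle
  calc (Real.cosh y - 1) * (12 - y ^ 2) ≤ (6 * y ^ 2 / (12 - y ^ 2)) * (12 - y ^ 2) :=
        mul_le_mul_of_nonneg_right hle (le_of_lt h12)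
    _ = 6 * y ^ 2 := by field_simp

theorem langevinDeriv_bounds (x : ℝ) :
    0 < langevinDeriv x ∧ langevinDeriv x ≤ 1 / 3 := by
  unfold langevinDeriv
  by_cases hx : x = 0
  · simp [hx]
  · simp only [hx, if_false]
    have hxa : 0 < |x| := abs_pos.mpr hx
    have hsa : |x| < Real.sinh |x| := Real.self_lt_sinh_iff.mpr hxa
    have habs : |Real.sinh x| = Real.sinh |x| := Real.abs_sinh x
    have hlt : x ^ 2 < Real.sinh x ^ 2 := by
      calc x ^ 2 = |x| ^ 2 := (sq_abs x).symm
        _ < Real.sinh |x| ^ 2 := by nlinarith [abs_nonneg x]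
        _ = |Real.sinh x| ^ 2 := by rw [habs]
        _ = Real.sinh x ^ 2 := sq_abs _
    have hx2 : 0 < x ^ 2 := by positivity
    have hs2 : 0 < Real.sinh x ^ 2 := lt_trans hx2 hlt
    constructor
    · have : 1 / Real.sinh x ^ 2 < 1 / x ^ 2 := one_div_lt_one_div_of_lt hx2 hlt
      linarith
    · -- key inequality with y = 2x
      have hkey : (Real.cosh (2 * x) - 1) * (12 - (2 * x) ^ 2) ≤ 6 * (2 * x) ^ 2 := by
        by_cases h12 : (2 * x) ^ 2 < 12
        · exact cosh_key (2 * x) h12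
        · have h1 : 1 ≤ Real.cosh (2 * x) := Real.one_le_cosh _
          have h2 : 12 - (2 * x) ^ 2 ≤ 0 := by linarith
          nlinarith
      have hcm : Real.cosh (2 * x) - 1 = 2 * Real.sinh x ^ 2 := by
        rw [Real.cosh_two_mul, Real.cosh_sq]; ring
      rw [hcm] at hkey
      -- hkey : 2 * sinh x ^ 2 * (12 - 4x^2) ≤ 24 x^2, i.e. sinh²(3-x²) ≤ 3x²
      have h3 : 3 * Real.sinh x ^ 2 - 3 * x ^ 2 ≤ x ^ 2 * Real.sinh x ^ 2 := by nlinarith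
      have e : 1 / x ^ 2 - 1 / Real.sinh x ^ 2
          = (Real.sinh x ^ 2 - x ^ 2) / (x ^ 2 * Real.sinh x ^ 2) := by
        field_simp
      rw [e, div_le_div_iff₀ (by positivity) (by norm_num)]
      nlinarith
end
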